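/- arXiv:1508.03546 — 6 statements merged into one kernel-verified Lean document; each statement's English description precedes it below -/
import Mathlib

section
/- Let p = (x, y) with x, y ∈ [0,1), and let q = (n, m) ∈ ℤ² with n > x and m ≥ y. Then q is visible from p if and only if denom((m − y)/(n − x)) ≤ 1/n. -/
/-!
A lattice point `z` on the open segment from `p = (x, y)` to `q = (n, m)` is `q - k • (1, s)`
with `s = (m - y)/(n - x)` and `0 < k < n - x`; its first coordinate forces `k ∈ ℤ`, and since
`0 ≤ x < 1` this means `0 < k < n`, while its second coordinate says `k s ∈ ℤ`. A positive
integer `k` with `k s ∈ ℤ` exists exactly when `s` is rational, and the least one is the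
denominator of `s`. So `q` is hidden iff `s` is rational with denominator `< n`, i.e.
iff `denom s > 1/n`.
-/

open Classical

/-- `q ∈ ℤ²` is visible from `p ∈ ℝ²` if the open line segment from `p` to `q`
contains no point of `ℤ²`. -/
def Visible (p : ℝ × ℝ) (q : ℤ × ℤ) : Prop :=
  ∀ t : ℝ, 0 < t → t < 1 →
    ¬∃ z : ℤ × ℤ, (1 - t) * p.1 + t * (q.1 : ℝ) = (z.1 : ℝ) ∧
      (1 - t) * p.2 + t * (q.2 : ℝ) = (z.2 : ℝ)

/-- `denom x = 0` if `x` is irrational, and `denom x = 1/d` if `x = c/d` in lowest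
terms with `d > 0`. -/
noncomputable def denom (x : ℝ) : ℝ :=
  if h : ∃ q : ℚ, (q : ℝ) = x then 1 / (h.choose.den : ℝ) else 0

lemma denom_ratCast (r : ℚ) : denom (r : ℝ) = 1 / (r.den : ℝ) := by
  have h : ∃ q : ℚ, (q : ℝ) = r := ⟨r, rfl⟩
  rw [denom, dif_pos h, Rat.cast_injective h.choose_spec]

lemma Rat.den_dvd_of_intCast_mul_eq_intCast {r : ℚ} {k c : ℤ} (hk : k ≠ 0) (h : k * r = c) :
    (r.den : ℤ) ∣ k := by
  have hr : r = Rat.divInt c k := by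
    rw [Rat.divInt_eq_div, ← h]
    field_simp
  exact hr ▸ Rat.den_dvd c k

lemma one_div_lt_denom_iff {n : ℤ} (hn : 0 < n) (s : ℝ) :
    1 / (n : ℝ) < denom s ↔ ∃ k : ℤ, 0 < k ∧ k < n ∧ ∃ c : ℤ, k * s = c := by
  have hn' : (0 : ℝ) < n := by exact_mod_cast hn
  by_cases hs : ∃ r : ℚ, (r : ℝ) = s
  · obtain ⟨r, rfl⟩ := hs
    rw [denom_ratCast, one_div_lt_one_div hn' (by positivity)]
    constructor
    · intro hden
      exact ⟨r.den, by positivity, by exact_mod_cast hden, r.num,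
        by exact_mod_cast r.den_mul_eq_num⟩
    · rintro ⟨k, hk0, hkn, c, hc⟩
      have hdvd := Rat.den_dvd_of_intCast_mul_eq_intCast hk0.ne' (by exact_mod_cast hc)
      exact_mod_cast (Int.le_of_dvd hk0 hdvd).trans_lt hkn
  · rw [denom, dif_neg hs]
    refine ⟨fun h => absurd h (not_lt.2 (by positivity)), ?_⟩
    rintro ⟨k, hk0, -, c, hc⟩
    have hk : (k : ℝ) ≠ 0 := by exact_mod_cast hk0.ne'
    exact absurd ⟨c / k, by push_cast; rw [← hc]; field_simp⟩ hs

lemma not_visible_iff_exists_mul_slope_eq_int {x y : ℝ} {n m : ℤ} (hx0 : 0 ≤ x) (hx1 : x < 1)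
    (hn : x < n) :
    ¬Visible (x, y) (n, m) ↔
      ∃ k : ℤ, 0 < k ∧ k < n ∧ ∃ c : ℤ, k * (((m : ℝ) - y) / ((n : ℝ) - x)) = c := by
  have hnx : (0 : ℝ) < n - x := sub_pos.2 hn
  simp only [Visible, not_forall, not_not]
  constructor
  · rintro ⟨t, ht0, ht1, ⟨a, b⟩, ha, hb⟩
    have hka : ((n - a : ℤ) : ℝ) = (1 - t) * (n - x) := by push_cast; linarith
    refine ⟨n - a, ?_, ?_, m - b, ?_⟩
    · have : (0 : ℝ) < (n - a : ℤ) := by rw [hka]; nlinarith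
      exact_mod_cast this
    · have : ((n - a : ℤ) : ℝ) < n := by rw [hka]; nlinarith
      exact_mod_cast this
    · rw [hka]
      field_simp
      push_cast
      linarith
  · rintro ⟨k, hk0, hkn, c, hc⟩
    have hk0' : (0 : ℝ) < k := by exact_mod_cast hk0
    have hkn' : (k : ℝ) ≤ n - 1 := by exact_mod_cast Int.le_sub_one_of_lt hkn
    refine ⟨1 - k / (n - x), by rw [sub_pos, div_lt_one hnx]; linarith,
      by linarith [div_pos hk0' hnx], (n - k, m - c), ?_, ?_⟩
    · push_cast
      field_simp
      ring
    · push_cast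
      rw [← hc]
      field_simp
      ring

theorem visibility_criterion_general (x y : ℝ) (hx0 : 0 ≤ x) (hx1 : x < 1)
    (n m : ℤ) (hn : x < (n : ℝ)) :
    Visible (x, y) (n, m) ↔ denom (((m : ℝ) - y) / ((n : ℝ) - x)) ≤ 1 / (n : ℝ) := by
  have hn0 : 0 < n := by exact_mod_cast hx0.trans_lt hn
  rw [← not_iff_not, not_visible_iff_exists_mul_slope_eq_int hx0 hx1 hn, not_le,
    one_div_lt_denom_iff hn0]

/-- Let `p = (x, y)` with `x, y ∈ [0,1)`, and let `q = (n, m) ∈ ℤ²` with `n > x` and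
`m ≥ y`. Then `q` is visible from `p` if and only if
`denom ((m − y)/(n − x)) ≤ 1/n`. -/
theorem visibility_criterion (x y : ℝ) (hx0 : 0 ≤ x) (hx1 : x < 1)
    (hy0 : 0 ≤ y) (hy1 : y < 1) (n m : ℤ) (hn : x < (n : ℝ)) (hm : y ≤ (m : ℝ)) :
    Visible (x, y) (n, m) ↔ denom (((m : ℝ) - y) / ((n : ℝ) - x)) ≤ 1 / (n : ℝ) :=
  visibility_criterion_general x y hx0 hx1 n m hn
end

section
/- Let p = (x, y) with x ∈ [0,1) rational and y ∈ [0,1) irrational. Then every q = (n, m) ∈ ℤ² with n > x and m ≥ y is visible from p. -/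
theorem exists_ratCast_eq_of_affineCombination_eq {a b c : ℚ} (hab : a ≠ b) {t : ℝ}
    (h : (1 - t) * a + t * b = c) : ∃ r : ℚ, (r : ℝ) = t := by
  have hab' : (b : ℝ) - a ≠ 0 := sub_ne_zero.mpr (Rat.cast_injective.ne hab.symm)
  refine ⟨(c - a) / (b - a), ?_⟩
  push_cast
  rw [div_eq_iff hab', ← h]
  ring

theorem Irrational.affineCombination_ratCast {y : ℝ} (hy : Irrational y) {r : ℚ} (hr : r ≠ 1)
    (b : ℚ) : Irrational ((1 - r) * y + r * b) := by
  have h : Irrational (((1 - r : ℚ) : ℝ) * y) := hy.ratCast_mul (sub_ne_zero.mpr hr.symm)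
  push_cast at h
  exact_mod_cast h.add_ratCast (r * b)

theorem visible_of_rational_irrational_general (x y : ℝ) (hxQ : ∃ q : ℚ, (q : ℝ) = x)
    (hyI : Irrational y) (n m : ℤ) (hn : x < (n : ℝ)) :
    Visible (x, y) (n, m) := by
  rintro t - ht1 ⟨⟨z₁, z₂⟩, h₁, h₂⟩
  obtain ⟨q, rfl⟩ := hxQ
  have hqn : q ≠ n := by exact_mod_cast hn.ne
  obtain ⟨r, rfl⟩ :=
    exists_ratCast_eq_of_affineCombination_eq (c := z₁) hqn (by exact_mod_cast h₁)
  have hr : r ≠ 1 := by rintro rfl; norm_num at ht1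
  exact (hyI.affineCombination_ratCast hr m).ne_int z₂ (by exact_mod_cast h₂)

/-- Let `p = (x, y)` with `x ∈ [0,1)` rational and `y ∈ [0,1)` irrational. Then every
`q = (n, m) ∈ ℤ²` with `n > x` and `m ≥ y` is visible from `p`. -/
theorem visible_of_rational_irrational (x y : ℝ) (hx0 : 0 ≤ x) (hx1 : x < 1)
    (hy0 : 0 ≤ y) (hy1 : y < 1) (hxQ : ∃ q : ℚ, (q : ℝ) = x) (hyI : Irrational y)
    (n m : ℤ) (hn : x < (n : ℝ)) (hm : y ≤ (m : ℝ)) :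
    Visible (x, y) (n, m) :=
  visible_of_rational_irrational_general x y hxQ hyI n m hn
end

section
/- Let x, y ∈ [0,1) and p = x·u + y·v, and fix (a′, b′) ∈ (ℤ/2)². For all integers a, b with a > x and b ≥ y, the lattice point q = a·u + b·v is visible from p and has label χ(q) = (a′, b′) if and only if a ≡ a′ (mod 2), b ≡ b′ (mod 2), and denom((b − y)/(a − x)) ≤ 1/a. (These q are exactly the endpoints of the unfoldings of geodesics on the unit regular tetrahedron from the point p to the vertex labeled (a′, b′).) -/
open Classical

/-- The basis vector `u = (1/2, √3/2)` of the triangular lattice. -/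
noncomputable def uvec : ℝ × ℝ := (1 / 2, Real.sqrt 3 / 2)

/-- The basis vector `v = (1/2, −√3/2)` of the triangular lattice. -/
noncomputable def vvec : ℝ × ℝ := (1 / 2, -(Real.sqrt 3) / 2)

/-- The point `a·u + b·v ∈ ℝ²`. -/
noncomputable def pt (a b : ℝ) : ℝ × ℝ :=
  (a * uvec.1 + b * vvec.1, a * uvec.2 + b * vvec.2)

/-- `q` is visible from `p` (with respect to the triangular lattice
`Λ = {a·u + b·v : a, b ∈ ℤ}`) if the open line segment from `p` to `q` contains no
point of `Λ`. -/
noncomputable def TriVisible (p q : ℝ × ℝ) : Prop :=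
  ∀ t : ℝ, 0 < t → t < 1 →
    ¬∃ a b : ℤ, pt (a : ℝ) (b : ℝ) =
      ((1 - t) * p.1 + t * q.1, (1 - t) * p.2 + t * q.2)

/-!
Since `pt` is a linear isomorphism onto `ℝ²`, visibility in the triangular lattice is visibility
in `ℤ²` for the coordinates `(x, y)` and `(a, b)`. A lattice point `(m, n)` of the open segment has
`x < m < a`, so `1 ≤ m`, and the slope `s = (b - y)/(a - x)` equals `(n - b)/(m - a)`: it is
rational with denominator dividing `a - m < a`. Conversely, if `s = p/d` in lowest terms with
`d < a`, then `(a - d, b - p)` lies on the open segment, because `a - d ≥ 1 > x`.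
-/

lemma pt_eq_pt_iff {a b c d : ℝ} : pt a b = pt c d ↔ a = c ∧ b = d := by
  refine ⟨fun h => ?_, fun ⟨hac, hbd⟩ => hac ▸ hbd ▸ rfl⟩
  have h1 := congrArg Prod.fst h
  have h2 := congrArg Prod.snd h
  simp only [pt, uvec, vvec] at h1 h2
  have hs : 0 < Real.sqrt 3 := by positivity
  have hsum : a + b = c + d := by linarith
  have hdiff : a - b = c - d := by
    refine mul_right_cancel₀ hs.ne' ?_
    linarith
  constructor <;> linarith

lemma pt_convex_combination (x y a b t : ℝ) :
    ((1 - t) * (pt x y).1 + t * (pt a b).1, (1 - t) * (pt x y).2 + t * (pt a b).2) =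
      pt ((1 - t) * x + t * a) ((1 - t) * y + t * b) := by
  simp only [pt, Prod.mk.injEq]
  constructor <;> ring

lemma triVisible_pt_iff (x y a b : ℝ) :
    TriVisible (pt x y) (pt a b) ↔
      ¬∃ t : ℝ, 0 < t ∧ t < 1 ∧
        ∃ m n : ℤ, (m : ℝ) = (1 - t) * x + t * a ∧ (n : ℝ) = (1 - t) * y + t * b := by
  simp only [TriVisible, pt_convex_combination, pt_eq_pt_iff, not_exists, not_and]

lemma denom_ratCast_s3 (q : ℚ) : denom q = 1 / q.den := by
  have h : ∃ p : ℚ, (p : ℝ) = q := ⟨q, rfl⟩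
  rw [denom, dif_pos h, show h.choose = q from mod_cast h.choose_spec]

lemma denom_le_one_div_iff {s k : ℝ} (hk : 0 < k) :
    denom s ≤ 1 / k ↔ ∀ q : ℚ, (q : ℝ) = s → k ≤ q.den := by
  by_cases hs : ∃ q : ℚ, (q : ℝ) = s
  · obtain ⟨q, rfl⟩ := hs
    have hden : (0 : ℝ) < q.den := mod_cast q.pos
    rw [denom_ratCast_s3, one_div_le_one_div hden hk]
    refine ⟨fun h q' hq' => ?_, fun h => h q rfl⟩
    rwa [show q' = q from mod_cast hq']
  · rw [denom, dif_neg hs]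
    exact iff_of_true (by positivity) fun q hq => absurd ⟨q, hq⟩ hs

section Segment

variable {x y : ℝ} {a b : ℤ}

lemma exists_rat_den_lt_of_lattice_point (hx0 : 0 ≤ x) (ha : x < a) {t : ℝ} (ht0 : 0 < t)
    (ht1 : t < 1) {m n : ℤ} (hm : (m : ℝ) = (1 - t) * x + t * a)
    (hn : (n : ℝ) = (1 - t) * y + t * b) :
    ∃ q : ℚ, (q : ℝ) = (b - y) / (a - x) ∧ (q.den : ℤ) < a := by
  have hm_pos : (0 : ℝ) < m := by nlinarith
  have hma : (m : ℝ) < a := by nlinarith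
  have hma' : m < a := mod_cast hma
  refine ⟨Rat.divInt (n - b) (m - a), ?_, ?_⟩
  · have hne : (a : ℝ) - x ≠ 0 := by linarith
    have hne' : (m : ℝ) - a ≠ 0 := by linarith
    rw [Rat.divInt_eq_div]
    push_cast
    rw [div_eq_div_iff hne' hne]
    linear_combination (a - x) * hn - (b - y) * hm
  · have hdvd : ((Rat.divInt (n - b) (m - a)).den : ℤ) ∣ a - m :=
      dvd_sub_comm.mp (Rat.den_dvd _ _)
    have hm1 : 1 ≤ m := by exact_mod_cast hm_pos
    have := Int.le_of_dvd (by omega) hdvd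
    omega

lemma exists_lattice_point_of_rat_den_lt (hx1 : x < 1) (ha : x < a) {q : ℚ}
    (hq : (q : ℝ) = (b - y) / (a - x)) (hden : (q.den : ℤ) < a) :
    ∃ t : ℝ, 0 < t ∧ t < 1 ∧
      ∃ m n : ℤ, (m : ℝ) = (1 - t) * x + t * a ∧ (n : ℝ) = (1 - t) * y + t * b := by
  have hax : 0 < (a : ℝ) - x := by linarith
  have hd : (1 : ℝ) ≤ q.den := mod_cast q.pos
  have had : (1 : ℝ) ≤ a - q.den := by exact_mod_cast (by omega : (1 : ℤ) ≤ a - q.den)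
  have hnum : (q.num : ℝ) = q.den * q := by exact_mod_cast (Rat.den_mul_eq_num q).symm
  rw [eq_div_iff hax.ne'] at hq
  refine ⟨(a - q.den - x) / (a - x), div_pos (by linarith) hax,
    (div_lt_one hax).mpr (by linarith), a - q.den, b - q.num, ?_, ?_⟩
  · push_cast
    field_simp
    ring
  · push_cast
    field_simp
    linear_combination (x - a) * hnum - q.den * hq

lemma exists_lattice_point_iff_exists_rat_den_lt (hx0 : 0 ≤ x) (hx1 : x < 1) (ha : x < a) :
    (∃ t : ℝ, 0 < t ∧ t < 1 ∧
      ∃ m n : ℤ, (m : ℝ) = (1 - t) * x + t * a ∧ (n : ℝ) = (1 - t) * y + t * b) ↔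
      ∃ q : ℚ, (q : ℝ) = (b - y) / (a - x) ∧ (q.den : ℝ) < a := by
  constructor
  · rintro ⟨t, ht0, ht1, m, n, hm, hn⟩
    obtain ⟨q, hq, hden⟩ := exists_rat_den_lt_of_lattice_point hx0 ha ht0 ht1 hm hn
    exact ⟨q, hq, mod_cast hden⟩
  · rintro ⟨q, hq, hden⟩
    exact exists_lattice_point_of_rat_den_lt hx1 ha hq (mod_cast hden)

end Segment

theorem tetrahedron_point_to_vertex_general (x y : ℝ) (hx0 : 0 ≤ x) (hx1 : x < 1)
    (a' b' : ZMod 2) (a b : ℤ)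
    (ha : x < (a : ℝ)) :
    (TriVisible (pt x y) (pt (a : ℝ) (b : ℝ)) ∧
        ((a : ZMod 2), (b : ZMod 2)) = (a', b')) ↔
      ((a : ZMod 2) = a' ∧ (b : ZMod 2) = b' ∧
        denom (((b : ℝ) - y) / ((a : ℝ) - x)) ≤ 1 / (a : ℝ)) := by
  have visible_iff : TriVisible (pt x y) (pt a b) ↔ denom ((b - y) / (a - x)) ≤ 1 / a := by
    rw [triVisible_pt_iff, exists_lattice_point_iff_exists_rat_den_lt hx0 hx1 ha,
      denom_le_one_div_iff (by linarith)]
    simp only [not_exists, not_and, not_lt]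
  rw [Prod.mk.injEq, visible_iff]
  tauto

/-- Let `x, y ∈ [0,1)`, `p = x·u + y·v`, and fix `(a′, b′) ∈ (ℤ/2)²`. For integers
`a > x` and `b ≥ y`, the lattice point `q = a·u + b·v` is visible from `p` and carries
the label `χ(q) = (a mod 2, b mod 2) = (a′, b′)` if and only if `a ≡ a′ (mod 2)`,
`b ≡ b′ (mod 2)`, and `denom ((b − y)/(a − x)) ≤ 1/a`. These `q` are exactly the
endpoints of the unfoldings of geodesics on the unit regular tetrahedron from `p` to
the vertex labeled `(a′, b′)`. -/
theorem tetrahedron_point_to_vertex (x y : ℝ) (hx0 : 0 ≤ x) (hx1 : x < 1)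
    (hy0 : 0 ≤ y) (hy1 : y < 1) (a' b' : ZMod 2) (a b : ℤ)
    (ha : x < (a : ℝ)) (hb : y ≤ (b : ℝ)) :
    (TriVisible (pt x y) (pt (a : ℝ) (b : ℝ)) ∧
        ((a : ZMod 2), (b : ZMod 2)) = (a', b')) ↔
      ((a : ZMod 2) = a' ∧ (b : ZMod 2) = b' ∧
        denom (((b : ℝ) - y) / ((a : ℝ) - x)) ≤ 1 / (a : ℝ)) :=
  tetrahedron_point_to_vertex_general x y hx0 hx1 a' b' a b ha
end

section
/- Let a, b ≥ 1 be coprime integers. Then the tumble sequence τ(a, b) is a palindrome: for every position j with 1 ≤ j ≤ a + b − 2, the letter of τ(a, b) in position j equals the letter in position a + b − 1 − j. -/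
/-- The alphabet `{r, u}` of cube rolls: `r` = right roll, `u` = up roll. -/
inductive Letter
  | r : Letter
  | u : Letter
  deriving DecidableEq

/-- The times `t ∈ (0,1)` at which the segment `t ↦ (t·a, t·b)` crosses a grid line:
`t = k/a` (crossing the vertical line `x = k`) for `1 ≤ k ≤ a−1`, and `t = i/b`
(crossing the horizontal line `y = i`) for `1 ≤ i ≤ b−1`. -/
def crossingTimes (a b : ℕ) : Finset ℚ :=
  ((Finset.Icc 1 (a - 1)).image fun k : ℕ => (k : ℚ) / (a : ℚ)) ∪
    ((Finset.Icc 1 (b - 1)).image fun i : ℕ => (i : ℚ) / (b : ℚ))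

/-- The tumble sequence `τ(a,b)`: the word over `{r, u}` obtained by recording, in
increasing order of the crossing times `t` of the segment `t ↦ (t·a, t·b)`, a letter
`r` at each crossing `t = k/a` of a vertical line and a letter `u` at each crossing
`t = i/b` of a horizontal line.  (For `gcd(a,b) = 1`, a crossing time `t` is of the
form `k/a` with `1 ≤ k ≤ a−1` exactly when `t·a` is an integer.) -/
def tumbleWord (a b : ℕ) : List Letter :=
  ((crossingTimes a b).sort (· ≤ ·)).map fun t =>
    if (t * (a : ℚ)).den = 1 then Letter.r else Letter.u

/-! The map `t ↦ 1 - t` reverses the order of the crossing times and permutes them (it swaps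
`k/a` with `(a-k)/a` and `i/b` with `(b-i)/b`), without changing which grid lines are crossed.
So the sorted list of crossing times read backwards is its own image under `t ↦ 1 - t`, and the
tumble word is a palindrome. Coprimality makes the crossings of vertical and horizontal lines
distinct, so the word has length `a + b - 2`. -/

theorem Finset.sort_map_eq_reverse {α : Type*} [LinearOrder α] {s : Finset α} {f : α → α}
    (hf : StrictAnti f) (hfs : Function.Involutive f) (hs : ∀ x ∈ s, f x ∈ s) :
    s.sort.map f = s.sort.reverse := by
  refine List.SortedGT.eq_reverse_of_mem_iff_of_sortedLT (fun y => ?_)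
    ((hf.sortedGT_listMap).mpr s.sortedLT_sort) s.sortedLT_sort
  simp only [List.mem_map, Finset.mem_sort]
  exact ⟨fun ⟨x, hx, hxy⟩ => hxy ▸ hs x hx, fun hy => ⟨f y, hs y hy, hfs y⟩⟩

/-- Crossing times with the lines `x = k`, `0 < k < a`; with `b` for `a`, with the lines `y = i`. -/
def gridCrossings (a : ℕ) : Finset ℚ :=
  (Finset.Icc 1 (a - 1)).image fun k : ℕ => (k : ℚ) / (a : ℚ)

theorem crossingTimes_eq_union (a b : ℕ) :
    crossingTimes a b = gridCrossings a ∪ gridCrossings b := rfl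

theorem one_sub_mem_gridCrossings {a : ℕ} {t : ℚ} (ht : t ∈ gridCrossings a) :
    1 - t ∈ gridCrossings a := by
  obtain ⟨k, hk, rfl⟩ := Finset.mem_image.mp ht
  rw [Finset.mem_Icc] at hk
  have ha : (a : ℚ) ≠ 0 := by norm_cast; omega
  refine Finset.mem_image.mpr ⟨a - k, Finset.mem_Icc.mpr (by omega), ?_⟩
  rw [Nat.cast_sub (by omega)]
  field_simp

theorem one_sub_mem_crossingTimes {a b : ℕ} {t : ℚ} (ht : t ∈ crossingTimes a b) :
    1 - t ∈ crossingTimes a b := by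
  rw [crossingTimes_eq_union, Finset.mem_union] at ht ⊢
  exact ht.imp one_sub_mem_gridCrossings one_sub_mem_gridCrossings

theorem card_gridCrossings (a : ℕ) : (gridCrossings a).card = a - 1 := by
  rw [gridCrossings, Finset.card_image_of_injOn, Nat.card_Icc, Nat.add_sub_cancel]
  intro k hk l _ hkl
  have ha : (a : ℚ) ≠ 0 := by
    norm_cast
    have := Finset.mem_Icc.mp hk
    omega
  exact_mod_cast (div_left_inj' ha).mp hkl

theorem disjoint_gridCrossings {a b : ℕ} (hab : a.Coprime b) :
    Disjoint (gridCrossings a) (gridCrossings b) := by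
  refine Finset.disjoint_left.mpr fun t hta htb => ?_
  obtain ⟨k, hk, rfl⟩ := Finset.mem_image.mp hta
  obtain ⟨i, hi, hik⟩ := Finset.mem_image.mp htb
  rw [Finset.mem_Icc] at hk hi
  have ha : (a : ℚ) ≠ 0 := by norm_cast; omega
  have hb : (b : ℚ) ≠ 0 := by norm_cast; omega
  have hcross : i * a = k * b := by
    rw [div_eq_div_iff hb ha] at hik
    exact_mod_cast hik
  have hdvd : a ∣ k := hab.dvd_of_dvd_mul_right ⟨i, by rw [← hcross, mul_comm]⟩
  exact absurd (Nat.le_of_dvd (by omega) hdvd) (by omega)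

theorem card_crossingTimes {a b : ℕ} (hab : a.Coprime b) :
    (crossingTimes a b).card = a + b - 2 := by
  rw [crossingTimes_eq_union, Finset.card_union_of_disjoint (disjoint_gridCrossings hab),
    card_gridCrossings, card_gridCrossings]
  rcases Nat.eq_zero_or_pos a with rfl | ha
  · rw [(Nat.coprime_zero_left b).mp hab]
  rcases Nat.eq_zero_or_pos b with rfl | hb
  · rw [(Nat.coprime_zero_right a).mp hab]
  omega

theorem length_tumbleWord {a b : ℕ} (hab : a.Coprime b) :
    (tumbleWord a b).length = a + b - 2 := by
  rw [tumbleWord, List.length_map, Finset.length_sort, card_crossingTimes hab]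

theorem reverse_tumbleWord (a b : ℕ) : (tumbleWord a b).reverse = tumbleWord a b := by
  have hsort : ((crossingTimes a b).sort (· ≤ ·)).reverse =
      ((crossingTimes a b).sort (· ≤ ·)).map (1 - ·) :=
    (Finset.sort_map_eq_reverse (fun _ _ h => sub_lt_sub_left h 1) (sub_sub_cancel 1)
      fun _ => one_sub_mem_crossingTimes).symm
  have hden (t : ℚ) : ((1 - t) * a).den = (t * a).den := by
    rw [sub_mul, one_mul, Rat.natCast_sub_den]
  rw [tumbleWord, ← List.map_reverse, hsort, List.map_map]
  exact List.map_congr_left fun t _ => by simp only [Function.comp_apply, hden]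

theorem tumble_sequence_palindrome_general (a b : ℕ) (hab : Nat.Coprime a b) :
    ∀ j : ℕ, 1 ≤ j → j ≤ a + b - 2 →
      (tumbleWord a b)[j - 1]? = (tumbleWord a b)[(a + b - 1 - j) - 1]? := by
  intro j hj1 hj2
  have hlen := length_tumbleWord hab
  conv_lhs => rw [← reverse_tumbleWord a b]
  rw [List.getElem?_reverse (by omega), hlen]
  congr 1
  omega

/-- Let `a, b ≥ 1` be coprime integers. Then the tumble sequence `τ(a, b)` is a
palindrome: for every position `j` with `1 ≤ j ≤ a + b − 2`, the letter of `τ(a, b)`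
in position `j` equals the letter in position `a + b − 1 − j` (positions indexed
`1, …, a+b−2`). -/
theorem tumble_sequence_palindrome (a b : ℕ) (ha : 1 ≤ a) (hb : 1 ≤ b)
    (hab : Nat.Coprime a b) :
    ∀ j : ℕ, 1 ≤ j → j ≤ a + b - 2 →
      (tumbleWord a b)[j - 1]? = (tumbleWord a b)[(a + b - 1 - j) - 1]? :=
  tumble_sequence_palindrome_general a b hab
end

section
/- Let t be a node of the Stern–Brocot tree with parents t⁺ and t⁻. Define t₀ = t and let t_{k+1} be the positive child of t_k for k ≥ 0; then σ(t_k) = σ(t)·(υ·ρ·σ(t⁺))^k for all k ≥ 0. Likewise, if s₀ = t and s_{k+1} is the negative child of s_k, then σ(s_k) = σ(t)·(ρ·υ·σ(t⁻))^k for all k ≥ 0. In particular, the sequence of cube orientations along any branch of the Stern–Brocot tree is periodic with period at most 4. -/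
/-- One step of the Stern–Brocot recursion on triples `(g, g⁺, g⁻)`:
`true` (the letter `+`) sends `(g, g⁺, g⁻)` to `(g + g⁺, g⁺, g)`, and
`false` (the letter `−`) sends `(g, g⁺, g⁻)` to `(g + g⁻, g, g⁻)`. -/
def sbStep : (ℕ × ℕ) × (ℕ × ℕ) × (ℕ × ℕ) → Bool → (ℕ × ℕ) × (ℕ × ℕ) × (ℕ × ℕ)
  | (g, gp, _gm), true => (g + gp, gp, g)
  | (g, _gp, gm), false => (g + gm, g, gm)

/-- The Stern–Brocot triple `(g(w), g⁺(w), g⁻(w))` of the node indexed by the word `w`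
over `{+, −}` (`true` = `+`, `false` = `−`), starting from
`(g(ε), g⁺(ε), g⁻(ε)) = ((1,1), (0,1), (1,0))`. -/
def sb (w : List Bool) : (ℕ × ℕ) × (ℕ × ℕ) × (ℕ × ℕ) :=
  w.foldl sbStep ((1, 1), (0, 1), (1, 0))

/-- The permutation of `{0,1,2,3}` given in one-line notation by
`f 0, f 1, f 2, f 3`. -/
def ol (f : Fin 4 → Fin 4) (h : Function.Bijective f := by decide) :
    Equiv.Perm (Fin 4) :=
  ⟨f, Fintype.bijInv h, Fintype.leftInverse_bijInv h, Fintype.rightInverse_bijInv h⟩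

/-- `ρ = 1230`, the permutation `0↦1, 1↦2, 2↦3, 3↦0` (a right roll). -/
def ρ : Equiv.Perm (Fin 4) := ol ![1, 2, 3, 0]

/-- `υ = 2310`, the permutation `0↦2, 1↦3, 2↦1, 3↦0` (an up roll). -/
def υ : Equiv.Perm (Fin 4) := ol ![2, 3, 1, 0]

/-- The permutation associated to a letter: `r ↦ ρ`, `u ↦ υ`. -/
def toPerm : Letter → Equiv.Perm (Fin 4)
  | Letter.r => ρ
  | Letter.u => υ

/-- The orientation of a word over `{r, u}`: its image under the monoid homomorphism
into `S₄` sending `r ↦ ρ` and `u ↦ υ`, composed left-to-right (the leftmost letter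
acts first).  Note that in Mathlib `(f * g) x = f (g x)`, so the left-to-right
product of a word is accumulated by multiplying each new letter on the left. -/
def orient (l : List Letter) : Equiv.Perm (Fin 4) :=
  l.foldl (fun acc x => toPerm x * acc) 1

/-- `σ` on pairs of nonnegative integers: `σ((0,1)) = ρ⁻¹`, `σ((1,0)) = υ⁻¹`, and
`σ((a,b))` is the orientation of the tumble sequence `τ(a,b)` otherwise. -/
def sigmaPt (p : ℕ × ℕ) : Equiv.Perm (Fin 4) :=
  if p = (0, 1) then ρ⁻¹
  else if p = (1, 0) then υ⁻¹
  else orient (tumbleWord p.1 p.2)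

/-- The cube orientation `σ(g(w))` associated to the Stern–Brocot node indexed by the
word `w`. -/
def σnode (w : List Bool) : Equiv.Perm (Fin 4) :=
  sigmaPt (sb w).1

namespace Finset

variable {α β : Type*} [LinearOrder α] [LinearOrder β]

theorem sort_union_of_forall_lt {s t : Finset α} (h : ∀ x ∈ s, ∀ y ∈ t, x < y) :
    (s ∪ t).sort = s.sort ++ t.sort := by
  have hdisj : List.Disjoint s.sort t.sort := fun x hs ht =>
    lt_irrefl x (h x (mem_sort _ |>.1 hs) x (mem_sort _ |>.1 ht))
  have hsorted : (s.sort ++ t.sort).Pairwise (· ≤ ·) :=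
    List.pairwise_append.2 ⟨pairwise_sort _ _, pairwise_sort _ _, fun x hx y hy =>
      (h x (mem_sort _ |>.1 hx) y (mem_sort _ |>.1 hy)).le⟩
  have hnodup : (s.sort ++ t.sort).Nodup :=
    List.nodup_append'.2 ⟨sort_nodup _ _, sort_nodup _ _, hdisj⟩
  rw [← (List.toFinset_sort _ hnodup).2 hsorted, List.toFinset_append, sort_toFinset,
    sort_toFinset]

theorem sort_image_of_strictMonoOn {s : Finset α} {f : α → β} (hf : StrictMonoOn f s) :
    (s.image f).sort = s.sort.map f := by
  rw [← sort_val, image_val_of_injOn hf.injOn,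
    ← Multiset.map_sort _ _ _ _ fun x hx y hy => (hf.le_iff_le hx hy).symm, sort_val]

end Finset

open Finset

theorem Nat.coprime_of_mul_eq_mul_add_one {a b c d : ℕ} (h : a * d = b * c + 1) :
    Nat.Coprime a b :=
  Nat.isCoprime_iff_coprime.1 ⟨d, -c, by linear_combination (mod_cast h : (a * d : ℤ) = b * c + 1)⟩

theorem Nat.Coprime.not_dvd_mul {x y k : ℕ} (hxy : Nat.Coprime x y) (hk : 0 < k) (hkx : k < x) :
    ¬ x ∣ k * y :=
  fun h => Nat.not_dvd_of_pos_of_lt hk hkx (hxy.dvd_mul_right.1 h)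

theorem Nat.Coprime.mul_ne_mul {A B k : ℕ} (hAB : Nat.Coprime A B) (hk : 0 < k) (hkA : k < A)
    (i : ℕ) : k * B ≠ i * A :=
  fun he => hAB.not_dvd_mul hk hkA ⟨i, he.trans (mul_comm i A)⟩

/-- A fraction `i/k` strictly between Farey neighbours `b/a < d/c` has `k ≥ a + c`. -/
theorem add_le_of_lt_of_lt_of_mul_eq {a b c d k i : ℕ} (h : a * d = b * c + 1)
    (hlo : k * b < i * a) (hhi : i * c < k * d) : a + c ≤ k := by
  have h1 : c * (k * b + 1) ≤ c * (i * a) := Nat.mul_le_mul_left c hlo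
  have h2 : a * (i * c + 1) ≤ a * (k * d) := Nat.mul_le_mul_left a hhi
  nlinarith

/-- A fraction `i/k` whose denominator is smaller than those of two Farey neighbours lies on the
same side of both. -/
theorem compare_mul_eq_of_mul_eq {a b c d k i : ℕ} (h : a * d = b * c + 1) (hk : 0 < k)
    (hka : k < a) (hkc : k < c) : compare (k * b) (i * a) = compare (k * d) (i * c) := by
  have hab : k * b ≠ i * a := (Nat.coprime_of_mul_eq_mul_add_one h).mul_ne_mul hk hka i
  have hcd : k * d ≠ i * c := (Nat.coprime_of_mul_eq_mul_add_one (a := d) (b := c) (c := b)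
    (d := a) (by linarith)).symm.mul_ne_mul hk hkc i
  rcases hab.lt_or_gt with hlt | hgt
  · have : k * d < i * c := lt_of_le_of_ne (not_lt.1 fun hhi =>
      (add_le_of_lt_of_lt_of_mul_eq h hlt hhi).not_gt (by omega)) hcd
    rw [compare_lt_iff_lt.2 hlt, compare_lt_iff_lt.2 this]
  · have : i * c < k * d := by nlinarith
    rw [compare_gt_iff_gt.2 hgt, compare_gt_iff_gt.2 this]

/-- The lattice point `(a,b)` is adjacent to the line of slope `B/A` (`aB - bA = 1`), so shifting by
it moves no lattice point `(k,i)` with `0 < a + k < A` across that line. -/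
theorem compare_add_mul_eq {a b A B k i : ℕ} (h : a * B = b * A + 1) (hAB : Nat.Coprime A B)
    (hk : 0 < k) (hkA : a + k < A) :
    compare ((a + k) * B) ((b + i) * A) = compare (k * B) (i * A) := by
  have hne := hAB.mul_ne_mul hk (by omega) i
  have hne' := hAB.mul_ne_mul (by omega) hkA (b + i)
  have e1 : (a + k) * B = b * A + 1 + k * B := by rw [add_mul, h]
  have e2 : (b + i) * A = b * A + i * A := add_mul b i A
  rcases hne.lt_or_gt with hlt | hgt
  · rw [compare_lt_iff_lt.2 hlt, compare_lt_iff_lt]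
    exact lt_of_le_of_ne (by omega) hne'
  · rw [compare_gt_iff_gt.2 hgt, compare_gt_iff_gt]
    omega

theorem Icc_one_add_sub_one {a p : ℕ} (ha : 0 < a) (hp : 0 < p) :
    Icc 1 (a + p - 1) = Icc 1 (a - 1) ∪ ({a} ∪ (Icc 1 (p - 1)).image (a + ·)) := by
  rw [image_add_left_Icc]
  ext x
  simp only [mem_Icc, mem_union, mem_singleton]
  omega

/-- The segment from `(0,0)` to `(A,B)` meets the vertical line `x = k` at time `k/A` and the
horizontal line `y = i` at time `i/B`; scaled by `AB`, these times become the keys `kB` and `iA`. -/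
def crossingKeys (A B : ℕ) (V H : Finset ℕ) : Finset ℕ :=
  V.image (· * B) ∪ H.image (· * A)

/-- When `A` and `B` are coprime and `H ⊆ [1, B-1]`, the keys divisible by `B` are exactly the
vertical crossings. -/
def keyWord (A B : ℕ) (V H : Finset ℕ) : List Letter :=
  (crossingKeys A B V H).sort.map fun n => if B ∣ n then Letter.r else Letter.u

theorem tumbleWord_eq_keyWord {a b : ℕ} (ha : 0 < a) (hb : 0 < b) :
    tumbleWord a b = keyWord a b (Icc 1 (a - 1)) (Icc 1 (b - 1)) := by
  have hab : (0 : ℚ) < a * b := by positivity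
  have htimes : crossingTimes a b = (crossingKeys a b (Icc 1 (a - 1)) (Icc 1 (b - 1))).image
      fun n : ℕ => (n : ℚ) / (a * b) := by
    simp only [crossingTimes, crossingKeys, image_union, image_image]
    congr 1 <;> refine image_congr fun k _ => ?_ <;> simp only [Function.comp_apply] <;>
      push_cast <;> field_simp
  have hmono : StrictMono fun n : ℕ => (n : ℚ) / (a * b) := fun m n hmn =>
    div_lt_div_of_pos_right (by exact_mod_cast hmn) hab
  rw [tumbleWord, htimes, sort_image_of_strictMonoOn (hmono.strictMonoOn _), List.map_map,
    keyWord]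
  refine List.map_congr_left fun n _ => ?_
  have hscale : (n : ℚ) / (a * b) * a = n / b := by field_simp
  simp only [Function.comp_apply, hscale, Rat.den_div_natCast_eq_one_iff n b hb.ne']

theorem keyWord_union {A B : ℕ} {V H V' H' : Finset ℕ}
    (h : ∀ m ∈ crossingKeys A B V H, ∀ n ∈ crossingKeys A B V' H', m < n) :
    keyWord A B (V ∪ V') (H ∪ H') = keyWord A B V H ++ keyWord A B V' H' := by
  rw [keyWord, crossingKeys, image_union, image_union, union_union_union_comm, ← crossingKeys,
    ← crossingKeys, sort_union_of_forall_lt h, List.map_append, keyWord, keyWord]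

theorem keyWord_singleton {A B a b : ℕ} (h : a * B = b * A + 1) (hB : 1 < B) :
    keyWord A B {a} {b} = [Letter.u, Letter.r] := by
  have hlt : ∀ m ∈ ({b * A} : Finset ℕ), ∀ n ∈ ({a * B} : Finset ℕ), m < n := by
    simp only [mem_singleton, forall_eq]
    omega
  have hndvd : ¬ B ∣ b * A := fun hdvd =>
    hB.ne' (Nat.dvd_one.1 ((Nat.dvd_add_right hdvd).1 (h ▸ dvd_mul_left B a)))
  simp only [keyWord, crossingKeys, image_singleton]
  rw [union_comm, sort_union_of_forall_lt hlt, sort_singleton, sort_singleton]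
  simp [hndvd]

/-- Translating the box `[0,x] × [0,y]` to `[c, c+x] × [d, d+y]` inside the box of the segment
to `(A,B)` does not change the word, provided every pair of crossings is met in the same order. -/
theorem keyWord_eq_keyWord_shift {x y c d A B : ℕ} (hx : 0 < x) (hy : 0 < y) (hA : 0 < A)
    (hxy : Nat.Coprime x y) (hAB : Nat.Coprime A B) (hdy : d + y ≤ B)
    (hcmp : ∀ k ∈ Icc 1 (x - 1), ∀ i ∈ Icc 1 (y - 1),
      compare (k * y) (i * x) = compare ((c + k) * B) ((d + i) * A)) :
    keyWord x y (Icc 1 (x - 1)) (Icc 1 (y - 1)) =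
      keyWord A B ((Icc 1 (x - 1)).image (c + ·)) ((Icc 1 (y - 1)).image (d + ·)) := by
  have hnot : ∀ i ∈ Icc 1 (y - 1), ¬ y ∣ i * x := fun i hi => by
    rw [mem_Icc] at hi
    exact hxy.symm.not_dvd_mul (by omega) (by omega)
  have hlab : ∀ i ∈ Icc 1 (y - 1), ¬ B ∣ (d + i) * A := fun i hi => by
    rw [mem_Icc] at hi
    exact hAB.symm.not_dvd_mul (by omega) (by omega)
  set E : ℕ → ℕ := fun n => if y ∣ n then (c + n / y) * B else (d + n / x) * A
  have hEv : ∀ k, E (k * y) = (c + k) * B := fun k => by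
    simp only [E, if_pos (dvd_mul_left y k), Nat.mul_div_cancel k hy]
  have hEh : ∀ i ∈ Icc 1 (y - 1), E (i * x) = (d + i) * A := fun i hi => by
    simp only [E, if_neg (hnot i hi), Nat.mul_div_cancel i hx]
  have himage : (crossingKeys x y (Icc 1 (x - 1)) (Icc 1 (y - 1))).image E =
      crossingKeys A B ((Icc 1 (x - 1)).image (c + ·)) ((Icc 1 (y - 1)).image (d + ·)) := by
    simp only [crossingKeys, image_union, image_image]
    congr 1 <;> refine image_congr fun n hn => ?_
    · exact hEv n
    · exact hEh n hn
  have hmono : StrictMonoOn E (crossingKeys x y (Icc 1 (x - 1)) (Icc 1 (y - 1))) := by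
    intro m hm n hn hmn
    simp only [crossingKeys, coe_union, coe_image, Set.mem_union, Set.mem_image, mem_coe] at hm hn
    rcases hm with ⟨k, hk, rfl⟩ | ⟨i, hi, rfl⟩ <;> rcases hn with ⟨k', hk', rfl⟩ | ⟨i', hi', rfl⟩
    · rw [hEv, hEv]
      exact Nat.mul_lt_mul_of_pos_right (by nlinarith) (by omega)
    · rw [hEv, hEh i' hi', ← compare_lt_iff_lt, ← hcmp k hk i' hi', compare_lt_iff_lt]
      exact hmn
    · rw [hEh i hi, hEv, ← compare_gt_iff_gt, ← hcmp k' hk' i hi, compare_gt_iff_gt]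
      exact hmn
    · rw [hEh i hi, hEh i' hi']
      exact Nat.mul_lt_mul_of_pos_right (by nlinarith) hA
  rw [keyWord, keyWord, ← himage, sort_image_of_strictMonoOn hmono, List.map_map]
  refine List.map_congr_left fun n hn => ?_
  simp only [mem_sort, crossingKeys, mem_union, mem_image] at hn
  rcases hn with ⟨k, -, rfl⟩ | ⟨i, hi, rfl⟩
  · simp only [Function.comp_apply, hEv, dvd_mul_left, if_true]
  · simp only [Function.comp_apply, hEh i hi, if_neg (hnot i hi), if_neg (hlab i hi)]

theorem tumbleWord_add {a b p q : ℕ} (h : a * q = b * p + 1) (hb : 0 < b) (hp : 0 < p) :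
    tumbleWord (a + p) (b + q) = tumbleWord a b ++ [Letter.u, Letter.r] ++ tumbleWord p q := by
  have ha : 0 < a := Nat.pos_of_ne_zero fun h0 => by simp [h0] at h
  have hq : 0 < q := Nat.pos_of_ne_zero fun h0 => by simp [h0] at h
  have hmed : a * (b + q) = b * (a + p) + 1 := by rw [mul_add, h, mul_add, mul_comm a b]; ring
  have hmed' : (a + p) * q = (b + q) * p + 1 := by rw [add_mul, h, add_mul, mul_comm q p]; ring
  have hcop := Nat.coprime_of_mul_eq_mul_add_one hmed'
  have hleft : tumbleWord a b = keyWord (a + p) (b + q) (Icc 1 (a - 1)) (Icc 1 (b - 1)) := by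
    rw [tumbleWord_eq_keyWord ha hb, keyWord_eq_keyWord_shift (c := 0) (d := 0) ha hb
      (by omega) (Nat.coprime_of_mul_eq_mul_add_one h) hcop (by omega)]
    · simp only [zero_add, image_id']
    · intro k hk i _
      rw [mem_Icc] at hk
      simpa only [zero_add] using compare_mul_eq_of_mul_eq hmed (by omega) (by omega) (by omega)
  have hright : tumbleWord p q = keyWord (a + p) (b + q) ((Icc 1 (p - 1)).image (a + ·))
      ((Icc 1 (q - 1)).image (b + ·)) := by
    rw [tumbleWord_eq_keyWord hp hq, keyWord_eq_keyWord_shift hp hq (by omega)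
      (Nat.coprime_of_mul_eq_mul_add_one (a := q) (b := p) (c := b) (d := a) (by linarith)).symm
      hcop le_rfl]
    intro k hk i _
    rw [mem_Icc] at hk
    rw [compare_add_mul_eq hmed hcop (by omega) (by omega),
      compare_mul_eq_of_mul_eq hmed' (by omega) (by omega) (by omega)]
  rw [hleft, hright, tumbleWord_eq_keyWord (by omega) (by omega), Icc_one_add_sub_one ha hp,
    Icc_one_add_sub_one hb hq, keyWord_union, keyWord_union, keyWord_singleton hmed (by omega),
    List.append_assoc]
  · have hlo : ∀ m ∈ crossingKeys (a + p) (b + q) {a} {b}, m < a * (b + q) + 1 := by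
      simp only [crossingKeys, forall_mem_union, forall_mem_image, mem_singleton, forall_eq]
      omega
    have hhi : ∀ n ∈ crossingKeys (a + p) (b + q) ((Icc 1 (p - 1)).image (a + ·))
        ((Icc 1 (q - 1)).image (b + ·)), a * (b + q) + 1 ≤ n := by
      simp only [crossingKeys, forall_mem_union, forall_mem_image, mem_Icc]
      exact ⟨fun k hk => by nlinarith, fun i hi => by nlinarith⟩
    exact fun m hm n hn => (hlo m hm).trans_le (hhi n hn)
  · have hlo : ∀ m ∈ crossingKeys (a + p) (b + q) (Icc 1 (a - 1)) (Icc 1 (b - 1)),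
        m < b * (a + p) := by
      simp only [crossingKeys, forall_mem_union, forall_mem_image, mem_Icc]
      refine ⟨fun k hk => ?_, fun i hi => ?_⟩
      · nlinarith [Nat.mul_le_mul_right (b + q) (show k + 1 ≤ a by omega)]
      · nlinarith [Nat.mul_le_mul_right (a + p) (show i + 1 ≤ b by omega)]
    have hhi : ∀ n ∈ crossingKeys (a + p) (b + q) ({a} ∪ (Icc 1 (p - 1)).image (a + ·))
        ({b} ∪ (Icc 1 (q - 1)).image (b + ·)), b * (a + p) ≤ n := by
      simp only [crossingKeys, forall_mem_union, forall_mem_image, mem_Icc, mem_singleton,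
        forall_eq]
      exact ⟨⟨by omega, fun k hk => by nlinarith⟩, le_rfl, fun i hi => by nlinarith⟩
    exact fun m hm n hn => (hlo m hm).trans_le (hhi n hn)

theorem tumbleWord_one_left {n : ℕ} (hn : 0 < n) :
    tumbleWord 1 n = List.replicate (n - 1) Letter.u := by
  rw [tumbleWord_eq_keyWord one_pos hn, keyWord, List.eq_replicate_iff]
  refine ⟨by simp [crossingKeys], fun x hx => ?_⟩
  simp only [List.mem_map, mem_sort, crossingKeys, mem_union, mem_image, mem_Icc] at hx
  obtain ⟨_, ⟨k, hk, rfl⟩ | ⟨i, hi, rfl⟩, rfl⟩ := hx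
  · omega
  · rw [if_neg ((Nat.coprime_one_right n).not_dvd_mul (by omega) (by omega))]

def Letter.swap : Letter → Letter
  | Letter.r => Letter.u
  | Letter.u => Letter.r

theorem tumbleWord_swap {a b : ℕ} (ha : 0 < a) (hb : 0 < b) (hab : Nat.Coprime a b) :
    tumbleWord b a = (tumbleWord a b).map Letter.swap := by
  rw [tumbleWord_eq_keyWord hb ha, tumbleWord_eq_keyWord ha hb, keyWord, keyWord, crossingKeys,
    crossingKeys, union_comm, List.map_map]
  refine List.map_congr_left fun n hn => ?_
  simp only [mem_sort, mem_union, mem_image, mem_Icc] at hn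
  rcases hn with ⟨k, hk, rfl⟩ | ⟨i, hi, rfl⟩
  · simp [hab.not_dvd_mul (k := k) (by omega) (by omega), Letter.swap]
  · simp [hab.symm.not_dvd_mul (k := i) (by omega) (by omega), Letter.swap]

theorem orient_append (l₁ l₂ : List Letter) : orient (l₁ ++ l₂) = orient l₂ * orient l₁ := by
  suffices ∀ g, l₂.foldl (fun acc x => toPerm x * acc) g = orient l₂ * g by
    rw [orient, List.foldl_append, this]; rfl
  induction l₂ with
  | nil => exact fun g => (one_mul g).symm
  | cons x l ih =>
    intro g
    rw [List.foldl_cons, ih, show orient (x :: l) = orient l * (toPerm x * 1) from ih _, mul_one,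
      mul_assoc]

theorem orient_singleton (x : Letter) : orient [x] = toPerm x := mul_one _

theorem orient_cons (x : Letter) (l : List Letter) : orient (x :: l) = orient l * toPerm x := by
  rw [← List.singleton_append, orient_append, orient_singleton]

theorem conj_swap_ρ : MulAut.conj (Equiv.swap 1 2) ρ = υ := by decide

theorem conj_swap_υ : MulAut.conj (Equiv.swap 1 2) υ = ρ := by decide

theorem orient_map_swap (l : List Letter) :
    orient (l.map Letter.swap) = MulAut.conj (Equiv.swap 1 2) (orient l) := by
  induction l with
  | nil => exact (map_one _).symm
  | cons x l ih =>
    rw [List.map_cons, orient_cons, orient_cons, ih, map_mul]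
    cases x
    · exact congrArg _ conj_swap_ρ.symm
    · exact congrArg _ conj_swap_υ.symm

theorem sigmaPt_of_pos {a b : ℕ} (ha : 0 < a) (hb : 0 < b) :
    sigmaPt (a, b) = orient (tumbleWord a b) := by
  rw [sigmaPt, if_neg (by simp only [Prod.mk.injEq, not_and]; omega),
    if_neg (by simp only [Prod.mk.injEq, not_and]; omega)]

theorem sigmaPt_swap {a b : ℕ} (hab : Nat.Coprime a b) :
    sigmaPt (b, a) = MulAut.conj (Equiv.swap 1 2) (sigmaPt (a, b)) := by
  rcases Nat.eq_zero_or_pos a with rfl | ha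
  · obtain rfl : b = 1 := Nat.coprime_zero_left b |>.1 hab
    decide
  rcases Nat.eq_zero_or_pos b with rfl | hb
  · obtain rfl : a = 1 := Nat.coprime_zero_right a |>.1 hab
    decide
  rw [sigmaPt_of_pos hb ha, sigmaPt_of_pos ha hb, tumbleWord_swap ha hb hab, orient_map_swap]

/-- For the parent `(0,1)`, the convention `σ(0,1) = ρ⁻¹` cancels the roll `r` of the generic
case. -/
theorem sigmaPt_add_of_mul_eq {a b p q : ℕ} (h : a * q = b * p + 1) (hb : 0 < b) :
    sigmaPt (a + p, b + q) = sigmaPt (p, q) * ρ * υ * sigmaPt (a, b) := by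
  rcases Nat.eq_zero_or_pos p with rfl | hp
  · obtain ⟨rfl, rfl⟩ : a = 1 ∧ q = 1 := mul_eq_one.1 (by simpa using h)
    have hword : tumbleWord 1 (b + 1) = tumbleWord 1 b ++ [Letter.u] := by
      rw [tumbleWord_one_left hb, tumbleWord_one_left (by omega), ← List.replicate_succ']
      congr 1
      omega
    rw [add_zero, sigmaPt_of_pos one_pos (by omega : 0 < b + 1), sigmaPt_of_pos one_pos hb, hword,
      orient_append, sigmaPt, if_pos rfl, inv_mul_cancel, one_mul, orient_singleton]
    rfl
  · have ha : 0 < a := Nat.pos_of_ne_zero fun h0 => by simp [h0] at h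
    have hq : 0 < q := Nat.pos_of_ne_zero fun h0 => by simp [h0] at h
    rw [sigmaPt_of_pos (by omega) (by omega), sigmaPt_of_pos hp hq, sigmaPt_of_pos ha hb,
      tumbleWord_add h hb hp, orient_append, orient_append, orient_cons, orient_singleton]
    rfl

theorem sigmaPt_add_of_mul_eq' {a b r s : ℕ} (h : b * r = a * s + 1) (ha : 0 < a) :
    sigmaPt (a + r, b + s) = sigmaPt (r, s) * υ * ρ * sigmaPt (a, b) := by
  have hmed : (b + s) * r = (a + r) * s + 1 := by rw [add_mul, h, add_mul, mul_comm s r]; ring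
  apply (MulAut.conj (Equiv.swap 1 2)).injective
  rw [map_mul, map_mul, map_mul, conj_swap_ρ, conj_swap_υ,
    ← sigmaPt_swap (Nat.coprime_of_mul_eq_mul_add_one hmed).symm,
    ← sigmaPt_swap (Nat.coprime_of_mul_eq_mul_add_one (a := r) (d := b) (c := a) (by linarith)),
    ← sigmaPt_swap (Nat.coprime_of_mul_eq_mul_add_one h).symm]
  exact sigmaPt_add_of_mul_eq h ha

/-- The node `g` of a Stern–Brocot triple `(g, g⁺, g⁻)` satisfies `det(g, g⁺) = det(g⁻, g) = 1`. -/
def IsFareyTriple (T : (ℕ × ℕ) × (ℕ × ℕ) × (ℕ × ℕ)) : Prop :=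
  T.1.1 * T.2.1.2 = T.1.2 * T.2.1.1 + 1 ∧ T.1.2 * T.2.2.1 = T.1.1 * T.2.2.2 + 1

theorem isFareyTriple_sbStep {T : (ℕ × ℕ) × (ℕ × ℕ) × (ℕ × ℕ)} (hT : IsFareyTriple T)
    (c : Bool) : IsFareyTriple (sbStep T c) := by
  obtain ⟨⟨a, b⟩, ⟨p, q⟩, ⟨r, s⟩⟩ := T
  obtain ⟨h₁, h₂⟩ := hT
  cases c <;> simp only [IsFareyTriple, sbStep, Prod.mk_add_mk] <;> constructor <;> nlinarith

theorem sb_append_singleton (w : List Bool) (c : Bool) : sb (w ++ [c]) = sbStep (sb w) c := by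
  rw [sb, List.foldl_append]
  rfl

theorem isFareyTriple_sb (w : List Bool) : IsFareyTriple (sb w) := by
  induction w using List.reverseRecOn with
  | nil => exact ⟨rfl, rfl⟩
  | append_singleton w c ih => rw [sb_append_singleton]; exact isFareyTriple_sbStep ih c

theorem IsFareyTriple.sigmaPt_sbStep_true {T : (ℕ × ℕ) × (ℕ × ℕ) × (ℕ × ℕ)}
    (hT : IsFareyTriple T) : sigmaPt (sbStep T true).1 = sigmaPt T.2.1 * ρ * υ * sigmaPt T.1 := by
  obtain ⟨⟨a, b⟩, ⟨p, q⟩, ⟨r, s⟩⟩ := T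
  exact sigmaPt_add_of_mul_eq hT.1 (Nat.pos_of_ne_zero fun h0 : b = 0 => by
    simp [IsFareyTriple, h0] at hT)

theorem IsFareyTriple.sigmaPt_sbStep_false {T : (ℕ × ℕ) × (ℕ × ℕ) × (ℕ × ℕ)}
    (hT : IsFareyTriple T) : sigmaPt (sbStep T false).1 = sigmaPt T.2.2 * υ * ρ * sigmaPt T.1 := by
  obtain ⟨⟨a, b⟩, ⟨p, q⟩, ⟨r, s⟩⟩ := T
  exact sigmaPt_add_of_mul_eq' hT.2 (Nat.pos_of_ne_zero fun h0 : a = 0 => by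
    simp [IsFareyTriple, h0] at hT)

theorem sb_append_replicate_succ (w : List Bool) (k : ℕ) (c : Bool) :
    sb (w ++ List.replicate (k + 1) c) = sbStep (sb (w ++ List.replicate k c)) c := by
  rw [List.replicate_succ', ← List.append_assoc, sb_append_singleton]

theorem sb_append_replicate_true_snd_fst (w : List Bool) (k : ℕ) :
    (sb (w ++ List.replicate k true)).2.1 = (sb w).2.1 := by
  induction k with
  | zero => rw [List.replicate_zero, List.append_nil]
  | succ k ih => rw [sb_append_replicate_succ, ← ih]; rfl

theorem sb_append_replicate_false_snd_snd (w : List Bool) (k : ℕ) :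
    (sb (w ++ List.replicate k false)).2.2 = (sb w).2.2 := by
  induction k with
  | zero => rw [List.replicate_zero, List.append_nil]
  | succ k ih => rw [sb_append_replicate_succ, ← ih]; rfl

theorem eq_pow_mul_of_succ {G : Type*} [Monoid G] {f : ℕ → G} {m : G}
    (h : ∀ k, f (k + 1) = m * f k) (k : ℕ) : f k = m ^ k * f 0 := by
  induction k with
  | zero => rw [pow_zero, one_mul]
  | succ k ih => rw [h, ih, pow_succ', mul_assoc]

theorem σnode_append_replicate_true (w : List Bool) (k : ℕ) :
    σnode (w ++ List.replicate k true) = (sigmaPt (sb w).2.1 * ρ * υ) ^ k * σnode w := by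
  refine (eq_pow_mul_of_succ (f := fun k => σnode (w ++ List.replicate k true))
    (m := sigmaPt (sb w).2.1 * ρ * υ) (fun k => ?_) k).trans ?_
  · rw [σnode, sb_append_replicate_succ, (isFareyTriple_sb _).sigmaPt_sbStep_true,
      sb_append_replicate_true_snd_fst]
    rfl
  · rw [List.replicate_zero, List.append_nil]

theorem σnode_append_replicate_false (w : List Bool) (k : ℕ) :
    σnode (w ++ List.replicate k false) = (sigmaPt (sb w).2.2 * υ * ρ) ^ k * σnode w := by
  refine (eq_pow_mul_of_succ (f := fun k => σnode (w ++ List.replicate k false))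
    (m := sigmaPt (sb w).2.2 * υ * ρ) (fun k => ?_) k).trans ?_
  · rw [σnode, sb_append_replicate_succ, (isFareyTriple_sb _).sigmaPt_sbStep_false,
      sb_append_replicate_false_snd_snd]
    rfl
  · rw [List.replicate_zero, List.append_nil]

set_option maxRecDepth 4000 in
theorem Equiv.Perm.exists_pow_eq_one_le_four (x : Equiv.Perm (Fin 4)) :
    ∃ m, 1 ≤ m ∧ m ≤ 4 ∧ x ^ m = 1 := by
  have : x ^ 3 = 1 ∨ x ^ 4 = 1 := by revert x; decide
  exact this.elim (fun h => ⟨3, by omega, by omega, h⟩) fun h => ⟨4, by omega, by omega, h⟩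

theorem exists_periodic_of_eq_pow_mul {f : ℕ → Equiv.Perm (Fin 4)} {x g : Equiv.Perm (Fin 4)}
    (hf : ∀ k, f k = x ^ k * g) : ∃ m, 1 ≤ m ∧ m ≤ 4 ∧ ∀ k, f (k + m) = f k := by
  obtain ⟨m, h1, h4, hm⟩ := x.exists_pow_eq_one_le_four
  exact ⟨m, h1, h4, fun k => by rw [hf, hf, pow_add, hm, mul_one]⟩

/-- Let `t` be the node of the Stern–Brocot tree indexed by the word `w`, with parents
`t⁺` and `t⁻`.  For the sequence `t₀ = t`, `t_{k+1}` = positive child of `t_k`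
(indexed by `w ++ [+]^k`), one has `σ(t_k) = σ(t)·(υ·ρ·σ(t⁺))^k`; for the sequence
`s₀ = t`, `s_{k+1}` = negative child of `s_k`, one has
`σ(s_k) = σ(t)·(ρ·υ·σ(t⁻))^k`.  (Products are composed left-to-right, the leftmost
factor acting first; in Mathlib's convention `(f * g) x = f (g x)`, the left-to-right
product `σ(t)·(υ·ρ·σ(t⁺))^k` is written `(σ(t⁺) * ρ * υ)^k * σ(t)`, and similarly for
the negative branch.)  In particular, the sequence of cube orientations along either
branch emanating from `t` is periodic with period at most `4`. -/
theorem branch_orientations_periodic (w : List Bool) :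
    (∀ k : ℕ, σnode (w ++ List.replicate k true) =
        (sigmaPt (sb w).2.1 * ρ * υ) ^ k * σnode w) ∧
      (∀ k : ℕ, σnode (w ++ List.replicate k false) =
        (sigmaPt (sb w).2.2 * υ * ρ) ^ k * σnode w) ∧
      (∃ m : ℕ, 1 ≤ m ∧ m ≤ 4 ∧ ∀ k : ℕ,
        σnode (w ++ List.replicate (k + m) true) = σnode (w ++ List.replicate k true)) ∧
      (∃ m : ℕ, 1 ≤ m ∧ m ≤ 4 ∧ ∀ k : ℕ,
        σnode (w ++ List.replicate (k + m) false) = σnode (w ++ List.replicate k false)) :=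
  ⟨σnode_append_replicate_true w, σnode_append_replicate_false w,
    exists_periodic_of_eq_pow_mul (σnode_append_replicate_true w),
    exists_periodic_of_eq_pow_mul (σnode_append_replicate_false w)⟩
end

section
/- Let q = (n, m) ∈ ℤ² with n, m ≥ 1, and let p, p′ ∈ [0,1)². Suppose that for every s ∈ [0,1], the open segment from (1−s)·p + s·p′ to q contains no point of ℤ². Then the crossing words of the segment from p to q and of the segment from p′ to q are equal. -/
open Classical

/-- The parameter values `t` at which the segment `t ↦ (1−t)·p + t·(n, m)` crosses a
vertical grid line `x = k`, `1 ≤ k ≤ n−1`. -/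
noncomputable def vertTimes (p : ℝ × ℝ) (n : ℕ) : Finset ℝ :=
  (Finset.Icc 1 (n - 1)).image fun k : ℕ => ((k : ℝ) - p.1) / ((n : ℝ) - p.1)

/-- The parameter values `t` at which the segment `t ↦ (1−t)·p + t·(n, m)` crosses a
horizontal grid line `y = i`, `1 ≤ i ≤ m−1`. -/
noncomputable def horizTimes (p : ℝ × ℝ) (m : ℕ) : Finset ℝ :=
  (Finset.Icc 1 (m - 1)).image fun i : ℕ => ((i : ℝ) - p.2) / ((m : ℝ) - p.2)

/-- The crossing word (tumble sequence) of the segment from `p ∈ [0,1)²` to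
`q = (n, m)`: the word over `{r, u}` obtained by recording, in increasing order of the
parameter, a letter `r` at each crossing of a vertical line `x = k` (`1 ≤ k ≤ n−1`)
and a letter `u` at each crossing of a horizontal line `y = i` (`1 ≤ i ≤ m−1`). -/
noncomputable def crossWord (p : ℝ × ℝ) (n m : ℕ) : List Letter :=
  ((vertTimes p n ∪ horizTimes p m).sort (· ≤ ·)).map fun t =>
    if t ∈ vertTimes p n then Letter.r else Letter.u

/-!
The crossing word only records the relative order of the crossing times
`(k - x) / (n - x)` of the vertical lines and `(i - y) / (m - y)` of the horizontal lines,
for the starting point `(x, y)`. A vertical and a horizontal crossing time coincide exactly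
when the segment passes through the lattice point `(k, i)`, so along the path of starting
points `(1 - s) • p + s • p'` no two crossing times ever meet. They depend continuously
on `s`, so by the intermediate value theorem their relative order is the same at `p` and
at `p'`.
-/

open Finset Function

theorem StrictMonoOn.finsetSort_image {α β : Type*} [LinearOrder α] [LinearOrder β]
    {s : Finset α} {f : α → β} (hf : StrictMonoOn f s) :
    (s.image f).sort = s.sort.map f := by
  rw [Finset.sort, Finset.sort, Finset.image_val_of_injOn hf.injOn,
    Multiset.map_sort _ _ _ _ fun a ha b hb => (hf.le_iff_le ha hb).symm]

theorem IsPreconnected.lt_iff_lt_of_forall_ne {X α : Type*} [TopologicalSpace X] [LinearOrder α]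
    [TopologicalSpace α] [OrderClosedTopology α] {s : Set X} (hs : IsPreconnected s) {a b : X}
    (ha : a ∈ s) (hb : b ∈ s) {f g : X → α} (hf : ContinuousOn f s) (hg : ContinuousOn g s)
    (hne : ∀ x ∈ s, f x ≠ g x) : f a < g a ↔ f b < g b := by
  constructor <;> intro hlt <;> by_contra! hle
  · obtain ⟨x, hx, hfg⟩ := hs.intermediate_value₂ ha hb hf hg hlt.le hle
    exact hne x hx hfg
  · obtain ⟨x, hx, hfg⟩ := hs.intermediate_value₂ hb ha hf hg hlt.le hle
    exact hne x hx hfg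

section Word

variable {α ι : Type*} [LinearOrder α]

noncomputable def wordOf (V H : Finset α) : List Letter :=
  ((V ∪ H).sort).map fun t => if t ∈ V then Letter.r else Letter.u

theorem wordOf_image_of_strictMonoOn {V H : Finset α} {f : α → α}
    (hf : StrictMonoOn f ↑(V ∪ H)) : wordOf (V.image f) (H.image f) = wordOf V H := by
  rw [wordOf, wordOf, ← Finset.image_union, hf.finsetSort_image, List.map_map]
  refine List.map_congr_left fun t ht => ?_
  have hmem : f t ∈ V.image f ↔ t ∈ V := by
    refine ⟨fun h => ?_, mem_image_of_mem f⟩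
    obtain ⟨a, ha, hat⟩ := mem_image.1 h
    rwa [← hf.injOn (by simp [ha]) (mem_sort _ |>.1 ht) hat]
  simp only [comp_apply, hmem]

theorem wordOf_image_eq_of_lt_iff [DecidableEq ι] (A B : Finset ι) (g g' : ι → α)
    (h : ∀ j ∈ A ∪ B, ∀ j' ∈ A ∪ B, g j < g j' ↔ g' j < g' j') :
    wordOf (A.image g) (B.image g) = wordOf (A.image g') (B.image g') := by
  rcases isEmpty_or_nonempty ι with hι | hι
  · simp only [eq_empty_of_isEmpty, image_empty]
  -- well defined on the `g`-times since `g j = g j'` forces `g' j = g' j'`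
  let f : α → α := fun t => g' (invFunOn g ↑(A ∪ B) t)
  have hf : ∀ j ∈ A ∪ B, f (g j) = g' j := by
    intro j hj
    have hex : ∃ a ∈ (↑(A ∪ B) : Set ι), g a = g j := ⟨j, hj, rfl⟩
    have hj₀ := invFunOn_mem hex
    have heq := invFunOn_eq hex
    exact le_antisymm (not_lt.1 fun hlt => heq.not_gt ((h _ hj _ hj₀).2 hlt))
      (not_lt.1 fun hlt => heq.not_lt ((h _ hj₀ _ hj).2 hlt))
  have himage : ∀ C ⊆ A ∪ B, C.image g' = (C.image g).image f := by
    intro C hC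
    rw [image_image]
    exact image_congr fun j hj => (hf j (hC hj)).symm
  rw [himage A subset_union_left, himage B subset_union_right, wordOf_image_of_strictMonoOn]
  rintro _ ha _ hb hab
  rw [← Finset.image_union, coe_image] at ha hb
  obtain ⟨j, hj, rfl⟩ := ha
  obtain ⟨j', hj', rfl⟩ := hb
  rw [hf j hj, hf j' hj']
  exact (h j hj j' hj').1 hab

end Word

section CrossTime

variable {x x' N k : ℝ}

noncomputable def crossTime (x N k : ℝ) : ℝ := (k - x) / (N - x)

theorem crossTime_injective (h : x ≠ N) : Injective (crossTime x N) := fun k l hkl => by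
  simpa [crossTime, div_left_inj' (sub_ne_zero.2 h.symm)] using hkl

theorem crossTime_mem_Ioo (hxk : x < k) (hkN : k < N) : crossTime x N k ∈ Set.Ioo 0 1 :=
  ⟨div_pos (by linarith) (by linarith), (div_lt_one (by linarith)).2 (by linarith)⟩

theorem one_sub_crossTime_mul_add (h : x ≠ N) :
    (1 - crossTime x N k) * x + crossTime x N k * N = k := by
  have : N - x ≠ 0 := sub_ne_zero.2 h.symm
  unfold crossTime
  field_simp
  ring

theorem one_sub_mul_add_mul_lt {s : ℝ} (hx : x < N) (hx' : x' < N) (hs : s ∈ Set.Icc 0 1) :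
    (1 - s) * x + s * x' < N :=
  convex_Iio N hx hx' (sub_nonneg.2 hs.2) hs.1 (sub_add_cancel 1 s)

theorem continuousOn_crossTime_segment (hx : x < N) (hx' : x' < N) :
    ContinuousOn (fun s => crossTime ((1 - s) * x + s * x') N k) (Set.Icc 0 1) :=
  ContinuousOn.div (by fun_prop) (by fun_prop) fun _ hs =>
    (sub_pos.2 (one_sub_mul_add_mul_lt hx hx' hs)).ne'

end CrossTime

def OpenSegmentAvoidsLattice (c : ℝ × ℝ) (n m : ℕ) : Prop :=
  ∀ t : ℝ, 0 < t → t < 1 →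
    ¬∃ z : ℤ × ℤ, (1 - t) * c.1 + t * n = z.1 ∧ (1 - t) * c.2 + t * m = z.2

/-- `Sum.inl k` indexes the crossing of `x = k`, `Sum.inr i` that of `y = i`. -/
noncomputable def crossingTime (c : ℝ × ℝ) (n m : ℕ) : ℕ ⊕ ℕ → ℝ :=
  Sum.elim (fun k => crossTime c.1 n k) (fun i => crossTime c.2 m i)

def crossingIndices (n m : ℕ) : Finset (ℕ ⊕ ℕ) :=
  (Icc 1 (n - 1)).image Sum.inl ∪ (Icc 1 (m - 1)).image Sum.inr

section Crossing

variable {c : ℝ × ℝ} {n m k i : ℕ}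

theorem inl_mem_crossingIndices : Sum.inl k ∈ crossingIndices n m ↔ 1 ≤ k ∧ k < n := by
  simp only [crossingIndices, mem_union, mem_image, mem_Icc, Sum.inl.injEq, exists_eq_right,
    reduceCtorEq, and_false, exists_const, or_false]
  omega

theorem inr_mem_crossingIndices : Sum.inr i ∈ crossingIndices n m ↔ 1 ≤ i ∧ i < m := by
  simp only [crossingIndices, mem_union, mem_image, mem_Icc, Sum.inr.injEq, exists_eq_right,
    reduceCtorEq, and_false, exists_const, false_or]
  omega

theorem crossWord_eq_wordOf (c : ℝ × ℝ) (n m : ℕ) :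
    crossWord c n m = wordOf (((Icc 1 (n - 1)).image Sum.inl).image (crossingTime c n m))
      (((Icc 1 (m - 1)).image Sum.inr).image (crossingTime c n m)) := by
  simp only [image_image]
  rfl

theorem crossTime_ne_crossTime_of_avoids (hc : OpenSegmentAvoidsLattice c n m)
    (hx : c.1 < 1) (hy : c.2 < 1) (hk : 1 ≤ k) (hkn : k < n) (hi : 1 ≤ i) (him : i < m) :
    crossTime c.1 n k ≠ crossTime c.2 m i := by
  have hk' : (1 : ℝ) ≤ k := by exact_mod_cast hk
  have hkn' : (k : ℝ) < n := by exact_mod_cast hkn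
  have hi' : (1 : ℝ) ≤ i := by exact_mod_cast hi
  have him' : (i : ℝ) < m := by exact_mod_cast him
  intro heq
  obtain ⟨ht0, ht1⟩ := crossTime_mem_Ioo (by linarith : c.1 < k) hkn'
  refine hc _ ht0 ht1 ⟨(k, i), ?_, ?_⟩
  · exact one_sub_crossTime_mul_add (by linarith)
  · rw [heq]
    exact one_sub_crossTime_mul_add (by linarith)

theorem crossingTime_injOn (hc : OpenSegmentAvoidsLattice c n m) (hx : c.1 < 1) (hy : c.2 < 1) :
    Set.InjOn (crossingTime c n m) (crossingIndices n m) := by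
  rintro (k | i) hj (k' | i') hj' heq <;>
    simp only [mem_coe, inl_mem_crossingIndices, inr_mem_crossingIndices] at hj hj' <;>
    simp only [crossingTime, Sum.elim_inl, Sum.elim_inr] at heq
  · exact congrArg _ (Nat.cast_injective (crossTime_injective
      (hx.trans_le (by exact_mod_cast hj.1.trans hj.2.le)).ne heq))
  · exact absurd heq (crossTime_ne_crossTime_of_avoids hc hx hy hj.1 hj.2 hj'.1 hj'.2)
  · exact absurd heq.symm (crossTime_ne_crossTime_of_avoids hc hx hy hj'.1 hj'.2 hj.1 hj.2)
  · exact congrArg _ (Nat.cast_injective (crossTime_injective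
      (hy.trans_le (by exact_mod_cast hj.1.trans hj.2.le)).ne heq))

theorem crossingTime_lt_crossingTime_iff {p p' : ℝ × ℝ} {j j' : ℕ ⊕ ℕ}
    (hp1 : p.1 < 1) (hp2 : p.2 < 1) (hq1 : p'.1 < 1) (hq2 : p'.2 < 1)
    (havoid : ∀ s : ℝ, 0 ≤ s → s ≤ 1 →
      OpenSegmentAvoidsLattice ((1 - s) * p.1 + s * p'.1, (1 - s) * p.2 + s * p'.2) n m)
    (hj : j ∈ crossingIndices n m) (hj' : j' ∈ crossingIndices n m) :
    crossingTime p n m j < crossingTime p n m j' ↔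
      crossingTime p' n m j < crossingTime p' n m j' := by
  obtain rfl | hjj := eq_or_ne j j'
  · exact iff_of_false (lt_irrefl _) (lt_irrefl _)
  let c : ℝ → ℝ × ℝ := fun s => ((1 - s) * p.1 + s * p'.1, (1 - s) * p.2 + s * p'.2)
  have hc0 : c 0 = p := by simp [c]
  have hc1 : c 1 = p' := by simp [c]
  have hcont : ∀ j ∈ crossingIndices n m,
      ContinuousOn (fun s => crossingTime (c s) n m j) (Set.Icc 0 1) := by
    rintro (k | i) hj <;>
      simp only [inl_mem_crossingIndices, inr_mem_crossingIndices] at hj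
    · have hn : (1 : ℝ) ≤ n := by exact_mod_cast hj.1.trans hj.2.le
      exact continuousOn_crossTime_segment (by linarith) (by linarith)
    · have hm : (1 : ℝ) ≤ m := by exact_mod_cast hj.1.trans hj.2.le
      exact continuousOn_crossTime_segment (by linarith) (by linarith)
  have key := isPreconnected_Icc.lt_iff_lt_of_forall_ne (Set.left_mem_Icc.2 zero_le_one)
    (Set.right_mem_Icc.2 zero_le_one) (hcont j hj) (hcont j' hj') fun s hs =>
      (crossingTime_injOn (havoid s hs.1 hs.2) (one_sub_mul_add_mul_lt hp1 hq1 hs)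
        (one_sub_mul_add_mul_lt hp2 hq2 hs)).ne hj hj' hjj
  simpa only [hc0, hc1] using key

end Crossing

theorem crossWord_constant_general (n m : ℕ) (p p' : ℝ × ℝ)
    (hp1' : p.1 < 1) (hp2' : p.2 < 1)
    (hq1' : p'.1 < 1) (hq2' : p'.2 < 1)
    (havoid : ∀ s : ℝ, 0 ≤ s → s ≤ 1 → ∀ t : ℝ, 0 < t → t < 1 →
      ¬∃ z : ℤ × ℤ,
        (1 - t) * ((1 - s) * p.1 + s * p'.1) + t * (n : ℝ) = (z.1 : ℝ) ∧
        (1 - t) * ((1 - s) * p.2 + s * p'.2) + t * (m : ℝ) = (z.2 : ℝ)) :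
    crossWord p n m = crossWord p' n m := by
  rw [crossWord_eq_wordOf, crossWord_eq_wordOf]
  exact wordOf_image_eq_of_lt_iff _ _ _ _ fun j hj j' hj' =>
    crossingTime_lt_crossingTime_iff hp1' hp2' hq1' hq2' havoid hj hj'

/-- Let `q = (n, m)` with `n, m ≥ 1`, and let `p, p′ ∈ [0,1)²`.  If for every
`s ∈ [0,1]` the open segment from `(1−s)·p + s·p′` to `q` contains no point of `ℤ²`,
then the crossing words of the segments from `p` to `q` and from `p′` to `q` are
equal. -/
theorem crossWord_constant (n m : ℕ) (hn : 1 ≤ n) (hm : 1 ≤ m) (p p' : ℝ × ℝ)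
    (hp1 : 0 ≤ p.1) (hp1' : p.1 < 1) (hp2 : 0 ≤ p.2) (hp2' : p.2 < 1)
    (hq1 : 0 ≤ p'.1) (hq1' : p'.1 < 1) (hq2 : 0 ≤ p'.2) (hq2' : p'.2 < 1)
    (havoid : ∀ s : ℝ, 0 ≤ s → s ≤ 1 → ∀ t : ℝ, 0 < t → t < 1 →
      ¬∃ z : ℤ × ℤ,
        (1 - t) * ((1 - s) * p.1 + s * p'.1) + t * (n : ℝ) = (z.1 : ℝ) ∧
        (1 - t) * ((1 - s) * p.2 + s * p'.2) + t * (m : ℝ) = (z.2 : ℝ)) :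
    crossWord p n m = crossWord p' n m :=
  crossWord_constant_general n m p p' hp1' hp2' hq1' hq2' havoid
end
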